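/- arXiv:2601.11933 — 2 statements merged into one kernel-verified Lean document; each statement's English description precedes it below -/
import Mathlib

section
/- For the subgroup $U = \{ \begin{pmatrix} e^t & 0 \\ t e^t & e^t \end{pmatrix} : t \in \mathbb{R} \}$ of $GL_2(\mathbb{R})$, the Cartan projection is given explicitly by $\mu\begin{pmatrix} e^t & 0 \\ te^t & e^t \end{pmatrix} = \left( t + \tfrac12 \log\tfrac{t^2+2+\sqrt{t^4+4t^2}}{2},\; t + \tfrac12 \log\tfrac{t^2+2-\sqrt{t^4+4t^2}}{2} \right)$, and for $t > 1$ the second coordinate $y$ satisfies $y < t - \log t$ while the first coordinate $x$ satisfies $x > t + \log t$; in particular $x \ge y + \log y$ for $t$ sufficiently large. -/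
/-!
Writing `g = jordanExp t`, the matrix `gᵀ g` has trace `e^{2t} (t² + 2)` and determinant `e^{4t}`,
so its eigenvalues are `e^{2t} c` for the two roots `c` of `c² - (t² + 2) c + 1`. These roots are
`s = largeRoot t` and `1 / s`, hence `x = t + ½ log s` and `y = t - ½ log s`, and all the
estimates reduce to `t² < s < e^{2t}` for `t > 1`.
-/

open Matrix Real

namespace Matrix

open Module.End

variable {K : Type*} [Field K]

theorem hasEigenvalue_toLin'_iff_isRoot_charpoly {n : Type*} [Fintype n] [DecidableEq n]
    (M : Matrix n n K) (μ : K) : HasEigenvalue M.toLin' μ ↔ M.charpoly.IsRoot μ := by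
  rw [hasEigenvalue_iff_mem_spectrum, spectrum_toLin', mem_spectrum_iff_isRoot_charpoly]

theorem hasEigenvalue_toLin'_fin_two_iff (M : Matrix (Fin 2) (Fin 2) K) (μ : K) :
    HasEigenvalue M.toLin' μ ↔ μ ^ 2 - M.trace * μ + M.det = 0 := by
  simp [hasEigenvalue_toLin'_iff_isRoot_charpoly, charpoly_fin_two]

end Matrix

section

variable (t : ℝ)

/-- `exp (t • !![1, 0; 1, 1])`, the element of `U` with parameter `t`. -/
noncomputable def jordanExp : Matrix (Fin 2) (Fin 2) ℝ := !![exp t, 0; t * exp t, exp t]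

theorem trace_transpose_mul_self_jordanExp :
    ((jordanExp t)ᵀ * jordanExp t).trace = exp (2 * t) * (t ^ 2 + 2) := by
  rw [two_mul, exp_add]
  simp [jordanExp, trace_fin_two, mul_apply, Fin.sum_univ_two]
  ring

theorem det_transpose_mul_self_jordanExp :
    ((jordanExp t)ᵀ * jordanExp t).det = exp (2 * t) ^ 2 := by
  rw [jordanExp, det_mul, det_transpose, det_fin_two_of, two_mul, exp_add]
  ring

theorem hasEigenvalue_transpose_mul_self_jordanExp {c : ℝ}
    (hc : c ^ 2 - (t ^ 2 + 2) * c + 1 = 0) :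
    Module.End.HasEigenvalue ((jordanExp t)ᵀ * jordanExp t).toLin' (exp (2 * t) * c) := by
  rw [hasEigenvalue_toLin'_fin_two_iff, trace_transpose_mul_self_jordanExp,
    det_transpose_mul_self_jordanExp]
  linear_combination exp (2 * t) ^ 2 * hc

noncomputable def largeRoot : ℝ := (t ^ 2 + 2 + √(t ^ 4 + 4 * t ^ 2)) / 2

noncomputable def smallRoot : ℝ := (t ^ 2 + 2 - √(t ^ 4 + 4 * t ^ 2)) / 2

theorem sq_sqrt_discrim : √(t ^ 4 + 4 * t ^ 2) ^ 2 = t ^ 4 + 4 * t ^ 2 :=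
  sq_sqrt (by positivity)

theorem largeRoot_isRoot : largeRoot t ^ 2 - (t ^ 2 + 2) * largeRoot t + 1 = 0 := by
  unfold largeRoot; linear_combination (1 / 4) * sq_sqrt_discrim t

theorem smallRoot_isRoot : smallRoot t ^ 2 - (t ^ 2 + 2) * smallRoot t + 1 = 0 := by
  unfold smallRoot; linear_combination (1 / 4) * sq_sqrt_discrim t

theorem largeRoot_mul_smallRoot : largeRoot t * smallRoot t = 1 := by
  unfold largeRoot smallRoot; linear_combination (-1 / 4) * sq_sqrt_discrim t

theorem largeRoot_pos : 0 < largeRoot t := by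
  unfold largeRoot; positivity

theorem smallRoot_pos : 0 < smallRoot t :=
  pos_of_mul_pos_right ((largeRoot_mul_smallRoot t).symm ▸ one_pos) (largeRoot_pos t).le

theorem log_smallRoot : log (smallRoot t) = -log (largeRoot t) := by
  rw [← log_inv, eq_inv_of_mul_eq_one_right (largeRoot_mul_smallRoot t)]

theorem one_le_largeRoot : 1 ≤ largeRoot t := by
  unfold largeRoot; nlinarith [sqrt_nonneg (t ^ 4 + 4 * t ^ 2)]

theorem largeRoot_lt : largeRoot t < t ^ 2 + 2 := by
  have := smallRoot_pos t
  unfold smallRoot at this; unfold largeRoot; linarith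

theorem sq_lt_largeRoot (ht : 1 / 2 < t ^ 2) : t ^ 2 < largeRoot t := by
  have : t ^ 2 - 2 < √(t ^ 4 + 4 * t ^ 2) := lt_sqrt_of_sq_lt (by nlinarith)
  unfold largeRoot; linarith

theorem two_mul_log_lt_log_largeRoot (ht : 1 < t) : 2 * log t < log (largeRoot t) := by
  have := log_lt_log (by positivity) (sq_lt_largeRoot t (by nlinarith))
  rwa [log_pow, Nat.cast_ofNat] at this

theorem largeRoot_lt_exp (ht : 1 / 2 ≤ t) : largeRoot t < exp (2 * t) := by
  calc largeRoot t < t ^ 2 + 2 := largeRoot_lt t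
    _ ≤ (t + 1) ^ 2 := by nlinarith
    _ ≤ exp t ^ 2 := by gcongr; linarith [add_one_le_exp t]
    _ = exp (2 * t) := by rw [← exp_nat_mul]; norm_num

theorem exp_two_mul_add_half_log {s : ℝ} (hs : 0 < s) :
    exp (2 * (t + 1 / 2 * log s)) = exp (2 * t) * s := by
  rw [show 2 * (t + 1 / 2 * log s) = 2 * t + log s by ring, exp_add, exp_log hs]

end

/-- Cartan projection of `U = {(e^t, 0; t e^t, e^t)}`: `e^{2x(t)}` and `e^{2y(t)}`
(with the explicit formulas below) are the eigenvalues of `gᵀg`, with `y ≤ x`;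
for `t > 1` one has `y < t - log t` and `x > t + log t`; and
`x ≥ y + log y` for `t` sufficiently large. -/
theorem stmt_14 :
    let g : ℝ → Matrix (Fin 2) (Fin 2) ℝ := fun t =>
      !![Real.exp t, 0; t * Real.exp t, Real.exp t]
    let x : ℝ → ℝ := fun t =>
      t + (1 / 2) * Real.log ((t ^ 2 + 2 + Real.sqrt (t ^ 4 + 4 * t ^ 2)) / 2)
    let y : ℝ → ℝ := fun t =>
      t + (1 / 2) * Real.log ((t ^ 2 + 2 - Real.sqrt (t ^ 4 + 4 * t ^ 2)) / 2)
    (∀ t : ℝ,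
      Module.End.HasEigenvalue (Matrix.toLin' ((g t)ᵀ * g t)) (Real.exp (2 * x t)) ∧
      Module.End.HasEigenvalue (Matrix.toLin' ((g t)ᵀ * g t)) (Real.exp (2 * y t)) ∧
      y t ≤ x t) ∧
    (∀ t : ℝ, 1 < t → y t < t - Real.log t ∧ t + Real.log t < x t) ∧
    (∃ T : ℝ, ∀ t ≥ T, y t + Real.log (y t) ≤ x t) := by
  intro g x y
  have hx (t : ℝ) : x t = t + 1 / 2 * log (largeRoot t) := rfl
  have hy (t : ℝ) : y t = t - 1 / 2 * log (largeRoot t) := by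
    rw [sub_eq_add_neg, ← mul_neg, ← log_smallRoot]; rfl
  refine ⟨fun t => ⟨?_, ?_, ?_⟩, fun t ht => ?_, ⟨2, fun t ht => ?_⟩⟩
  · rw [hx, exp_two_mul_add_half_log t (largeRoot_pos t)]
    exact hasEigenvalue_transpose_mul_self_jordanExp t (largeRoot_isRoot t)
  · show Module.End.HasEigenvalue _ (exp (2 * (t + 1 / 2 * log (smallRoot t))))
    rw [exp_two_mul_add_half_log t (smallRoot_pos t)]
    exact hasEigenvalue_transpose_mul_self_jordanExp t (smallRoot_isRoot t)
  · rw [hx, hy]; linarith [log_nonneg (one_le_largeRoot t)]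
  · rw [hx, hy]; constructor <;> linarith [two_mul_log_lt_log_largeRoot t ht]
  · have hL_lt : log (largeRoot t) < 2 * t :=
      (log_lt_iff_lt_exp (largeRoot_pos t)).2 (largeRoot_lt_exp t (by linarith))
    have hy_pos : 0 < y t := by rw [hy]; linarith
    have hy_le : y t ≤ largeRoot t := by
      rw [hy]; nlinarith [log_nonneg (one_le_largeRoot t), sq_lt_largeRoot t (by nlinarith)]
    calc y t + log (y t) ≤ y t + log (largeRoot t) := by gcongr
      _ = x t := by rw [hx, hy]; ring
end

section
/- Suppose sequences $l_n = \begin{pmatrix} e^{2t_n} & 0 \\ 0 & 1 \end{pmatrix}$ and $l_n' = \begin{pmatrix} 1 & 0 \\ u_n' & e^{-2t_n'} \end{pmatrix}$ in $GL_2(\mathbb{R})$ with $t_n \to \infty$, and sequences $r_n = \begin{pmatrix} a_n & b_n \\ c_n & d_n \end{pmatrix}$, $r_n'$ ranging in a compact subset of $GL_2(\mathbb{R})$, satisfy $l_n r_n = r_n' l_n'$ with $t_n' \asymp_+ -t_n$ (i.e. $t_n'$ differs from $-t_n$ by a bounded amount). Then $|b_n| \asymp_\times 1$: there are constants $0 <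 c < C$ with $c \le |b_n| \le C$ for all sufficiently large $n$. -/
open Filter

/-- If `lₙ rₙ = rₙ' lₙ'` with `lₙ = diag(e^{2tₙ}, 1)`, `lₙ' = (1,0;uₙ',e^{-2tₙ'})`,
`tₙ → ∞`, `tₙ' ≍₊ -tₙ`, and `rₙ, rₙ'` ranging in a compact set of invertible
matrices, then the `(1,2)`-entry `bₙ` of `rₙ` satisfies `|bₙ| ≍ₓ 1`. -/
theorem stmt_18 (t t' u' : ℕ → ℝ) (r r' : ℕ → Matrix (Fin 2) (Fin 2) ℝ)
    (K : Set (Matrix (Fin 2) (Fin 2) ℝ)) (hK : IsCompact K)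
    (hKU : ∀ A ∈ K, IsUnit A) (hr : ∀ n, r n ∈ K) (hr' : ∀ n, r' n ∈ K)
    (ht : Tendsto t atTop atTop)
    (heq : ∀ n, (!![Real.exp (2 * t n), 0; 0, 1] : Matrix (Fin 2) (Fin 2) ℝ) * r n =
      r' n * !![1, 0; u' n, Real.exp (-2 * t' n)])
    (hasymp : ∃ M : ℝ, ∀ n, |t' n + t n| ≤ M) :
    ∃ c C : ℝ, 0 < c ∧ 0 < C ∧
      ∃ N : ℕ, ∀ n ≥ N, c ≤ |r n 0 1| ∧ |r n 0 1| ≤ C := by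
  obtain ⟨M, hM⟩ := hasymp
  have hK0 : K.Nonempty := ⟨r 0, hr 0⟩
  -- bound on entries
  have hcont : Continuous fun A : Matrix (Fin 2) (Fin 2) ℝ =>
      |A 0 0| + |A 0 1| + |A 1 0| + |A 1 1| := by
    apply Continuous.add
    apply Continuous.add
    apply Continuous.add
    all_goals exact ((continuous_apply _).comp (continuous_apply _)).abs
  obtain ⟨A0, hA0K, hA0⟩ := hK.exists_isMaxOn hK0 hcont.continuousOn
  set C0 : ℝ := |A0 0 0| + |A0 0 1| + |A0 1 0| + |A0 1 1| with hC0
  set C : ℝ := max C0 1 with hCdef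
  have hC1 : (1:ℝ) ≤ C := le_max_right _ _
  have hCpos : (0:ℝ) < C := lt_of_lt_of_le one_pos hC1
  have hent : ∀ A ∈ K, ∀ i j, |A i j| ≤ C := by
    intro A hA i j
    have h : |A 0 0| + |A 0 1| + |A 1 0| + |A 1 1| ≤ C0 := hA0 hA
    have : |A i j| ≤ C0 := by
      fin_cases i <;> fin_cases j <;>
        simp only [Fin.mk_zero, Fin.mk_one, Fin.zero_eta, Fin.mk_one] <;>
        nlinarith [abs_nonneg (A 0 0), abs_nonneg (A 0 1), abs_nonneg (A 1 0),
          abs_nonneg (A 1 1)]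
    exact this.trans (le_max_left _ _)
  -- lower bound on |det|
  have hdetcont : Continuous fun A : Matrix (Fin 2) (Fin 2) ℝ => |A.det| :=
    (continuous_id.matrix_det).abs
  obtain ⟨A1, hA1K, hA1⟩ := hK.exists_isMinOn hK0 hdetcont.continuousOn
  set δ : ℝ := |A1.det| with hδdef
  have hδpos : 0 < δ := by
    have : A1.det ≠ 0 := by
      have := (Matrix.isUnit_iff_isUnit_det A1).mp (hKU A1 hA1K)
      exact this.ne_zero
    exact abs_pos.mpr this
  have hδ : ∀ A ∈ K, δ ≤ |A.det| := fun A hA => hA1 hA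
  -- entry equations
  have key : ∀ n, |r n 0 1| * Real.exp (2 * t n) = |r' n 0 1| * Real.exp (-(2 * t' n)) := by
    intro n
    have h01 := congrFun (congrFun (heq n) 0) 1
    simp only [Matrix.mul_apply, Fin.sum_univ_two, Matrix.cons_val', Matrix.cons_val_zero,
      Matrix.cons_val_one, Matrix.head_cons, Matrix.empty_val', Matrix.cons_val_fin_one,
      Matrix.head_fin_const] at h01
    simp [Matrix.mul_apply, Fin.sum_univ_two] at h01
    calc |r n 0 1| * Real.exp (2 * t n) = |Real.exp (2 * t n) * r n 0 1| := by
          rw [abs_mul, abs_of_pos (Real.exp_pos _)]; ring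
      _ = |r' n 0 1 * Real.exp (-(2 * t' n))| := by rw [h01]
      _ = _ := by rw [abs_mul, abs_of_pos (Real.exp_pos _)]
  have key11 : ∀ n, |r n 1 1| = |r' n 1 1| * Real.exp (-(2 * t' n)) := by
    intro n
    have h11 := congrFun (congrFun (heq n) 1) 1
    simp [Matrix.mul_apply, Fin.sum_univ_two] at h11
    rw [h11, abs_mul, abs_of_pos (Real.exp_pos _)]
  -- choose N
  have hεpos : 0 < δ / (2 * C ^ 2) := by positivity
  have hN : ∀ᶠ n in atTop, M - Real.log (δ / (2 * C ^ 2)) / 2 ≤ t n :=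
    ht.eventually_ge_atTop _
  obtain ⟨N, hNall⟩ := eventually_atTop.mp hN
  refine ⟨δ / (2 * C) * Real.exp (-(2 * M)), C, by positivity, hCpos, N, fun n hn => ?_⟩
  have htn := hNall n hn
  -- |r'11| small
  have hexp2t' : Real.exp (2 * t' n) ≤ Real.exp (2 * M - 2 * t n) := by
    apply Real.exp_le_exp.mpr
    have := abs_le.mp (hM n)
    linarith [this.2]
  have hsmall : Real.exp (2 * M - 2 * t n) ≤ δ / (2 * C ^ 2) := by
    rw [← Real.exp_log hεpos]
    apply Real.exp_le_exp.mpr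
    linarith
  have hr'11 : |r' n 1 1| ≤ C * (δ / (2 * C ^ 2)) := by
    have h := key11 n
    have : |r' n 1 1| = |r n 1 1| * Real.exp (2 * t' n) := by
      rw [h]
      rw [mul_assoc, ← Real.exp_add]
      simp
    rw [this]
    have h1 : |r n 1 1| ≤ C := hent _ (hr n) 1 1
    exact mul_le_mul h1 (hexp2t'.trans hsmall) (Real.exp_pos _).le hCpos.le
  -- |r'01| bounded below
  have hdet : δ ≤ |(r' n).det| := hδ _ (hr' n)
  have hdetform : (r' n).det = r' n 0 0 * r' n 1 1 - r' n 0 1 * r' n 1 0 := Matrix.det_fin_two _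
  have h00 : |r' n 0 0| ≤ C := hent _ (hr' n) 0 0
  have h10 : |r' n 1 0| ≤ C := hent _ (hr' n) 1 0
  have hr'01 : δ / (2 * C) ≤ |r' n 0 1| := by
    have htri : |(r' n).det| ≤ |r' n 0 0| * |r' n 1 1| + |r' n 0 1| * |r' n 1 0| := by
      rw [hdetform]
      have h := abs_sub (r' n 0 0 * r' n 1 1) (r' n 0 1 * r' n 1 0)
      rw [abs_mul, abs_mul] at h
      exact h
    have h1 : |r' n 0 0| * |r' n 1 1| ≤ C * (C * (δ / (2 * C ^ 2))) := by
      apply mul_le_mul h00 hr'11 (abs_nonneg _) hCpos.le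
    have h2 : C * (C * (δ / (2 * C ^ 2))) = δ / 2 := by
      field_simp
    have h3 : |r' n 0 1| * |r' n 1 0| ≤ |r' n 0 1| * C :=
      mul_le_mul_of_nonneg_left h10 (abs_nonneg _)
    have h4 : δ / 2 ≤ |r' n 0 1| * C := by linarith
    rw [div_le_iff₀ (by positivity : (0:ℝ) < 2 * C)]
    nlinarith
  -- conclude
  constructor
  · have hk := key n
    have : |r n 0 1| = |r' n 0 1| * Real.exp (-(2 * t' n) - 2 * t n) := by
      have e : Real.exp (-(2 * t' n) - 2 * t n) * Real.exp (2 * t n) = Real.exp (-(2 * t' n)) := by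
        rw [← Real.exp_add]; congr 1; ring
      apply mul_right_cancel₀ (Real.exp_pos (2 * t n)).ne'
      rw [hk, mul_assoc, e]
    rw [this]
    have he : Real.exp (-(2 * M)) ≤ Real.exp (-(2 * t' n) - 2 * t n) := by
      apply Real.exp_le_exp.mpr
      have := abs_le.mp (hM n)
      linarith [this.1]
    exact mul_le_mul hr'01 he (Real.exp_pos _).le (abs_nonneg _)
  · exact hent _ (hr n) 0 1
end
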